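/- arXiv:0912.0298 — 3 statements merged into one kernel-verified Lean document; each statement's English description precedes it below -/
import Mathlib

section
/- Let x be a strong sink of a tilted algebra C admitting a rightmost complete slice Σ⁺. Then x is a strong sink if and only if the injective module I_x is a source of Σ⁺. -/
/-!
If `I_x` is a strong sink, sincerity gives a slice module below it, and below that a source of
`Σ⁺`; being rightmost, that source is injective, so it must be `I_x` itself. Conversely, if
`I_x` is a source of `Σ⁺` and `J < I_x` is injective, sincerity puts a slice module below `J`,
so convexity puts `J` in `Σ⁺`, contradicting that `I_x` is a source.
-/

section

variable {α : Type*} [PartialOrder α] {S I : Set α} {a : α}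

theorem minimal_mem_iff_forall_not_lt : Minimal (· ∈ S) a ↔ a ∈ S ∧ ∀ b ∈ S, ¬ b < a := by
  simp only [minimal_iff_forall_lt]
  exact and_congr_right fun _ => ⟨fun h b hb hlt => h hlt hb, fun h b hlt hb => h b hb hlt⟩

theorem Minimal.minimal_of_subset_upperClosure_of_finite (ha : Minimal (· ∈ I) a)
    (hI : I ⊆ upperClosure S) (hS : S.Finite) (hSI : {c | Minimal (· ∈ S) c} ⊆ I) :
    Minimal (· ∈ S) a := by
  obtain ⟨c, hcS, hca⟩ := mem_upperClosure.1 (hI ha.prop)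
  obtain ⟨m, hmc, hm⟩ := hS.isPWO.exists_le_minimal hcS
  have hma : m = a := ha.eq_of_le (hSI hm) (hmc.trans hca)
  exact hma ▸ hm

theorem Minimal.minimal_of_subset_upperClosure_of_ordConnected (ha : Minimal (· ∈ S) a)
    (haI : a ∈ I) (hI : I ⊆ upperClosure S) (hS : S.OrdConnected) : Minimal (· ∈ I) a := by
  refine minimal_mem_iff_forall_not_lt.2 ⟨haI, fun b hbI hba => ?_⟩
  obtain ⟨c, hcS, hcb⟩ := mem_upperClosure.1 (hI hbI)
  exact ha.not_lt (hS.out hcS ha.prop ⟨hcb, hba.le⟩) hba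

end

theorem strong_sink_iff_injective_source_of_rightmost_slice
    {Ind : Type*} [PartialOrder Ind]
    (Inj S : Set Ind)
    -- `Σ⁺` is finite
    (hfin : S.Finite)
    -- `Σ⁺` is sincere: every injective receives a morphism from the slice
    (hsincere : ∀ J ∈ Inj, ∃ L ∈ S, L ≤ J)
    -- `Σ⁺` is convex in `ind C`
    (hconvex : ∀ L ∈ S, ∀ N ∈ S, ∀ X : Ind, L ≤ X → X ≤ N → X ∈ S)
    -- `Σ⁺` is rightmost: every source of `Σ⁺` is injective
    (hrightmost : ∀ s ∈ S, (∀ N ∈ S, ¬ N < s) → s ∈ Inj)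
    -- the injective module `I_x` at the point `x`
    (Ix : Ind) (hIx : Ix ∈ Inj) :
    -- `x` is a strong sink  ↔  `I_x` is an (injective) source of `Σ⁺`
    (∀ J ∈ Inj, ¬ J < Ix) ↔ (Ix ∈ S ∧ ∀ N ∈ S, ¬ N < Ix) := by
  have hsinc : Inj ⊆ upperClosure S := fun J hJ => mem_upperClosure.2 (hsincere J hJ)
  have hconn : S.OrdConnected := ⟨fun L hL N hN X hX => hconvex L hL N hN X hX.1 hX.2⟩
  have hsources : {s | Minimal (· ∈ S) s} ⊆ Inj := fun s hs =>
    hrightmost s hs.prop fun _ hN => hs.not_lt hN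
  have hsink : (∀ J ∈ Inj, ¬ J < Ix) ↔ Minimal (· ∈ Inj) Ix := by
    simp only [minimal_mem_iff_forall_not_lt, hIx, true_and]
  rw [hsink, ← minimal_mem_iff_forall_not_lt]
  exact ⟨fun h => h.minimal_of_subset_upperClosure_of_finite hsinc hfin hsources,
    fun h => h.minimal_of_subset_upperClosure_of_ordConnected hIx hsinc hconn⟩
end

section
/- Let C be a tilted algebra of tree type admitting a rightmost complete slice Σ⁺. Then there exists a strong sink x in C such that the completion G_x of x in Σ⁺ exists. -/
/-!
STATEMENT 8 (Lemma 3.2): Let `C` be a tilted algebra of tree type admitting a rightmost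
complete slice `Σ⁺`.  Then there exists a strong sink `x` in `C` such that the completion
`G_x` of `x` in `Σ⁺` exists.

We work with the quiver of the rightmost slice `Σ⁺`: a finite tree quiver with vertex set
`V` (the modules of `Σ⁺`), arrow relation `E`, and marked subset `J` of injective modules.
Since `Σ⁺` is rightmost, all its sources are injective, i.e. lie in `J`.  By Lemma 3.1,
strong sinks of `C` correspond exactly to (injective) sources of `Σ⁺`.  The completion
`G_x` is a nonempty full connected subquiver containing `I_x`, closed under predecessors
(condition (b)), closed under immediate successors of injectives (condition (c)), and such
that every immediate predecessor of an injective of `G_x` is injective (condition (d)).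
-/

/-- `G` is a completion of the source `x` in the slice quiver `(V, E)` with injectives `J`:
nonempty, connected, contains `x = I_x`, closed under predecessors, closed under immediate
successors of injectives, and immediate predecessors of its injectives are injective. -/
def IsCompletion {V : Type*} (E : V → V → Prop) (J : Set V) (x : V) (G : Set V) : Prop :=
  G.Nonempty ∧ x ∈ G ∧
  ((SimpleGraph.fromRel E).induce G).Connected ∧
  (∀ a b : V, E a b → b ∈ G → a ∈ G) ∧
  (∀ v w : V, v ∈ G → v ∈ J → E v w → w ∈ G) ∧
  (∀ n v : V, E n v → v ∈ G → v ∈ J → n ∈ J)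

section Aux

variable {V : Type*} (E : V → V → Prop)

/-- reachability inside a set `T` through the symmetrized graph. -/
def Rch (T : Set V) : V → V → Prop :=
  Relation.ReflTransGen (fun a b => a ∈ T ∧ b ∈ T ∧ (SimpleGraph.fromRel E).Adj a b)

variable {E}

lemma Rch.symm {T : Set V} {a b : V} (h : Rch E T a b) : Rch E T b a := by
  induction h with
  | refl => exact Relation.ReflTransGen.refl
  | tail hbc h ih => exact Relation.ReflTransGen.head ⟨h.2.1, h.1, h.2.2.symm⟩ ih

lemma Rch.trans {T : Set V} {a b c : V} (h : Rch E T a b) (h' : Rch E T b c) :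
    Rch E T a c := Relation.ReflTransGen.trans h h'

/-- from `Rch` to connectivity of the induced graph -/
lemma rch_connected {T : Set V} (hne : T.Nonempty)
    (h : ∀ a b, a ∈ T → b ∈ T → Rch E T a b) :
    ((SimpleGraph.fromRel E).induce T).Connected := by
  have : Nonempty T := hne.to_subtype
  rw [SimpleGraph.connected_iff]
  refine ⟨fun a b => ?_, this⟩
  obtain ⟨a, ha⟩ := a
  obtain ⟨b, hb⟩ := b
  have key : ∀ (c : V) (hc : c ∈ T), Rch E T a c →
      ((SimpleGraph.fromRel E).induce T).Reachable ⟨a, ha⟩ ⟨c, hc⟩ := by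
    intro c hc hrc
    induction hrc with
    | refl => exact SimpleGraph.Reachable.refl _
    | @tail b c hab hbc ih =>
      exact (ih hbc.1).trans (SimpleGraph.Adj.reachable (by
        simpa using hbc.2.2 : ((SimpleGraph.fromRel E).induce T).Adj ⟨b, hbc.1⟩ ⟨c, hbc.2.1⟩))
  exact key b hb (h a b ha hb)

/-- from a walk to `Rch` -/
lemma walk_rch {T : Set V} {a b : V} (p : (SimpleGraph.fromRel E).Walk a b)
    (hp : ∀ x ∈ p.support, x ∈ T) : Rch E T a b := by
  induction p with
  | nil => exact Relation.ReflTransGen.refl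
  | @cons u v w h p ih =>
    refine Relation.ReflTransGen.head ⟨hp u (by simp), hp v ?_, h⟩ (ih fun x hx => hp x ?_)
    · simp [SimpleGraph.Walk.support_cons, p.start_mem_support]
    · simp [SimpleGraph.Walk.support_cons, hx]

/-- from `Rch` to a walk whose support stays in `{a} ∪ T` -/
lemma rch_walk {T : Set V} {a b : V} (h : Rch E T a b) :
    ∃ p : (SimpleGraph.fromRel E).Walk a b, ∀ x ∈ p.support, x = a ∨ x ∈ T := by
  induction h with
  | refl => exact ⟨SimpleGraph.Walk.nil, by simp⟩
  | @tail b c hab hbc ih =>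
    obtain ⟨p, hp⟩ := ih
    refine ⟨p.concat hbc.2.2, fun x hx => ?_⟩
    simp only [SimpleGraph.Walk.support_concat, List.concat_eq_append, List.mem_append, List.mem_singleton] at hx
    rcases hx with hx | hx
    · exact hp x hx
    · exact Or.inr (hx ▸ hbc.2.1)

end Aux

section Main

variable {V : Type*} [Finite V]

theorem main_lemma
    (E : V → V → Prop)
    (htree : (SimpleGraph.fromRel E).IsTree)
    (hacyclic : ∀ v : V, ¬ Relation.TransGen E v v)
    (J : Set V)
    (hsources : ∀ v : V, (∀ u : V, ¬ E u v) → v ∈ J) :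
    ∀ (k : ℕ) (S : Set V), S.ncard ≤ k → S.Nonempty →
      (∀ a b, a ∈ S → b ∈ S → Rch E S a b) →
      (∀ a b : V, E a b → b ∈ S → a ∈ S) →
      (∀ u w : V, u ∈ S → u ∈ J → E u w → w ∈ S) →
      ∃ x : V, (∀ u : V, ¬ E u x) ∧ x ∈ J ∧ ∃ G : Set V, IsCompletion E J x G := by
  intro k
  induction k with
  | zero =>
    intro S hcard hne _ _ _
    exact absurd (Nat.le_zero.mp hcard)
      (Set.Nonempty.ncard_pos (hs := S.toFinite) hne).ne'
  | succ k ih =>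
    intro S hcard hne hconn hpred hsucc
    by_cases hbad : ∃ n v : V, E n v ∧ v ∈ S ∧ v ∈ J ∧ n ∉ J
    · -- cut along the bad arrow n → v, recurse into component of n
      obtain ⟨n, v, hEnv, hvS, hvJ, hnJ⟩ := hbad
      have hnS : n ∈ S := hpred n v hEnv hvS
      have hnv : n ≠ v := fun h => hacyclic v (Relation.TransGen.single (h ▸ hEnv))
      -- S' := component of n in S \ {v}
      set S' : Set V := {u | u ∈ S ∧ u ≠ v ∧ Rch E (S \ {v}) n u} with hS'
      have hnS' : n ∈ S' := ⟨hnS, hnv, Relation.ReflTransGen.refl⟩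
      have hS'sub : S' ⊆ S := fun u hu => hu.1
      -- core tree lemma: a neighbor of v in S' must be n
      have L : ∀ b, b ∈ S' → (SimpleGraph.fromRel E).Adj b v → b = n := by
        intro b hb hAdj
        classical
        by_contra hbn
        obtain ⟨p, hp⟩ := rch_walk hb.2.2
        have hvp : v ∉ p.support := by
          intro hv
          rcases hp v hv with h | h
          · exact hnv h.symm
          · exact h.2 rfl
        have hv1 : v ∉ p.toPath.1.support := fun h =>
          hvp (SimpleGraph.Walk.support_toPath_subset p h)
        -- two distinct paths from n to b
        have hAdjnv : (SimpleGraph.fromRel E).Adj n v := by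
          exact (SimpleGraph.fromRel_adj E _ _).mpr ⟨hnv, Or.inl hEnv⟩
        have hAdjvb : (SimpleGraph.fromRel E).Adj v b := hAdj.symm
        have hP2 : (SimpleGraph.Walk.cons hAdjnv
            (SimpleGraph.Walk.cons hAdjvb SimpleGraph.Walk.nil)).IsPath := by
          rw [SimpleGraph.Walk.cons_isPath_iff, SimpleGraph.Walk.cons_isPath_iff]
          refine ⟨⟨SimpleGraph.Walk.IsPath.nil, by simp [hAdjvb.ne]⟩, ?_⟩
          simp only [SimpleGraph.Walk.support_cons, SimpleGraph.Walk.support_nil,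
            List.mem_cons, List.mem_singleton]
          push_neg
          exact ⟨hnv, fun h => hbn h.symm, by simp⟩
        have huniq := SimpleGraph.isAcyclic_iff_path_unique.mp htree.2
        have := huniq p.toPath ⟨_, hP2⟩
        apply hv1
        rw [this]
        simp [SimpleGraph.Walk.support_cons]
      -- S' hypotheses
      have hS'card : S'.ncard ≤ k := by
        have hss : S' ⊂ S := ⟨hS'sub, fun h => (h hvS).2.1 rfl⟩
        have := Set.ncard_lt_ncard hss S.toFinite
        omega
      have hS'conn : ∀ a b, a ∈ S' → b ∈ S' → Rch E S' a b := by
        have strength : ∀ u, Rch E (S \ {v}) n u → Rch E S' n u := by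
          intro u h
          induction h with
          | refl => exact Relation.ReflTransGen.refl
          | @tail b c hnb hbc ih2 =>
            refine Relation.ReflTransGen.tail ih2 ⟨⟨hbc.1.1, hbc.1.2, hnb⟩,
              ⟨hbc.2.1.1, hbc.2.1.2, Relation.ReflTransGen.tail hnb hbc⟩, hbc.2.2⟩
        intro a b ha hb
        exact (strength a ha.2.2).symm.trans (strength b hb.2.2)
      have hS'pred : ∀ a b : V, E a b → b ∈ S' → a ∈ S' := by
        intro a b hEab hb
        have haS : a ∈ S := hpred a b hEab hb.1
        have haV : a ≠ b := fun h => hacyclic a (Relation.TransGen.single (h ▸ hEab))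
        have hAdj : (SimpleGraph.fromRel E).Adj b a := by
          exact (SimpleGraph.fromRel_adj E _ _).mpr ⟨fun h => haV h.symm, Or.inr hEab⟩
        have hav : a ≠ v := by
          intro h
          subst h
          have := L b hb hAdj
          exact hacyclic a (Relation.TransGen.head hEab (Relation.TransGen.single (this ▸ hEnv)))
        exact ⟨haS, hav, Relation.ReflTransGen.tail hb.2.2
          ⟨⟨hb.1, hb.2.1⟩, ⟨haS, hav⟩, hAdj⟩⟩
      have hS'succ : ∀ u w : V, u ∈ S' → u ∈ J → E u w → w ∈ S' := by
        intro u w hu huJ hEuw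
        have hwS : w ∈ S := hsucc u w hu.1 huJ hEuw
        have huw : u ≠ w := fun h => hacyclic u (Relation.TransGen.single (h ▸ hEuw))
        have hAdj : (SimpleGraph.fromRel E).Adj u w := by
          exact (SimpleGraph.fromRel_adj E _ _).mpr ⟨huw, Or.inl hEuw⟩
        have hwv : w ≠ v := by
          intro h
          subst h
          exact hnJ ((L u hu hAdj) ▸ huJ)
        exact ⟨hwS, hwv, Relation.ReflTransGen.tail hu.2.2
          ⟨⟨hu.1, hu.2.1⟩, ⟨hwS, hwv⟩, hAdj⟩⟩
      exact ih S' hS'card ⟨n, hnS'⟩ hS'conn hS'pred hS'succ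
    · -- no bad arrow: take G = S and a source of S
      push_neg at hbad
      -- find a source in S
      have : IsTrans V (Relation.TransGen E) := ⟨fun _ _ _ => Relation.TransGen.trans⟩
      have : IsIrrefl V (Relation.TransGen E) := ⟨hacyclic⟩
      have hwf : WellFounded (Relation.TransGen E) :=
        Finite.wellFounded_of_trans_of_irrefl _
      obtain ⟨x, hxS, hxmin⟩ := hwf.has_min S hne
      have hxsource : ∀ u : V, ¬ E u x := by
        intro u hEux
        exact hxmin u (hpred u x hEux hxS) (Relation.TransGen.single hEux)
      refine ⟨x, hxsource, hsources x hxsource, S, hne, hxS,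
        rch_connected hne hconn, hpred, hsucc, ?_⟩
      intro a b hEab hbS hbJ
      exact hbad a b hEab hbS hbJ

end Main


/-- **Lemma 3.2**: if the slice quiver is a finite tree and all sources are injective
(the slice is rightmost), then some strong sink `x` — equivalently, some injective source
`I_x` of `Σ⁺` — admits a completion `G_x`. -/
theorem exists_strong_sink_with_completion
    {V : Type*} [Finite V] [Nonempty V]
    (E : V → V → Prop)
    -- the slice `Σ⁺` is a tree
    (htree : (SimpleGraph.fromRel E).IsTree)
    -- the slice quiver has no oriented cycles
    (hacyclic : ∀ v : V, ¬ Relation.TransGen E v v)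
    (J : Set V)
    -- rightmost: every source of `Σ⁺` is injective
    (hsources : ∀ v : V, (∀ u : V, ¬ E u v) → v ∈ J) :
    ∃ x : V, (∀ u : V, ¬ E u x) ∧ x ∈ J ∧ ∃ G : Set V, IsCompletion E J x G := by
  have huniv : ∀ a b : V, a ∈ (Set.univ : Set V) → b ∈ (Set.univ : Set V) →
      Rch E Set.univ a b := by
    intro a b _ _
    exact (htree.1.preconnected a b).elim fun p => walk_rch p (fun x _ => Set.mem_univ x)
  exact main_lemma E htree hacyclic J hsources (Set.univ : Set V).ncard Set.univ le_rfl
    Set.univ_nonempty huniv (fun a b _ _ => Set.mem_univ a) (fun u w _ _ _ => Set.mem_univ w)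
end

section
/- In a finite tree quiver with a distinguished subset J of 'injective' vertices containing all sources, there exists a source x such that the smallest full connected subquiver G containing x, closed under predecessors, closed under immediate successors of vertices of J in G, satisfies: every immediate predecessor of a vertex of J ∩ G lies in J. -/
/-!
Pick a source `x` whose closure `G(x)` has the fewest vertices. If some arrow `n → v` had
`v ∈ G(x) ∩ J` but `n ∉ J`, delete the edge `n — v` from the tree and let `S` be the component
of `n`. The only edge leaving `S` is `n → v`, which is neither an arrow into `S` nor an arrow out
of a marked vertex, so `S` is closed. A source `y` above `n` lies in `G(x)` and in `S`, hence
`G(y) ⊆ G(x) ∩ S` misses `v`, contradicting the minimality of `G(x)`.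
-/

/-- `S` is closed under predecessors, and under immediate successors of marked vertices. -/
def IsClosedUnder {V : Type*} (E : V → V → Prop) (J S : Set V) : Prop :=
  (∀ a b : V, E a b → b ∈ S → a ∈ S) ∧ (∀ v w : V, v ∈ S → v ∈ J → E v w → w ∈ S)

/-- The closure `G(x)`: the smallest subset containing `x` which is closed under
predecessors and under immediate successors of marked vertices. -/
def quiverClosure {V : Type*} (E : V → V → Prop) (J : Set V) (x : V) : Set V :=
  ⋂₀ {S : Set V | x ∈ S ∧ IsClosedUnder E J S}

namespace SimpleGraph

variable {V : Type*} {G : SimpleGraph V}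

theorem eq_of_adj_of_reachable_deleteEdges {e : Sym2 V} {n a b : V} (hab : G.Adj a b)
    (ha : (G.deleteEdges {e}).Reachable n a) (hb : ¬ (G.deleteEdges {e}).Reachable n b) :
    s(a, b) = e :=
  by_contra fun hne ↦ hb (ha.trans ((deleteEdges_adj ..).2 ⟨hab, hne⟩).reachable)

end SimpleGraph

open SimpleGraph Relation

section QuiverClosure

variable {V : Type*} {E : V → V → Prop} {J S : Set V}

theorem IsClosedUnder.mem_of_reflTransGen (hS : IsClosedUnder E J S) {a b : V}
    (hab : ReflTransGen E a b) (hb : b ∈ S) : a ∈ S := by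
  induction hab using ReflTransGen.head_induction_on with
  | refl => exact hb
  | head hac _ ih => exact hS.1 _ _ hac ih

theorem quiverClosure_subset {x : V} (hx : x ∈ S) (hS : IsClosedUnder E J S) :
    quiverClosure E J x ⊆ S :=
  Set.sInter_subset_of_mem ⟨hx, hS⟩

theorem isClosedUnder_quiverClosure (x : V) : IsClosedUnder E J (quiverClosure E J x) :=
  ⟨fun a b hab hb S hS ↦ hS.2.1 a b hab (hb S hS),
    fun v w hv hvJ hvw S hS ↦ hS.2.2 v w (hv S hS) hvJ hvw⟩

theorem quiverClosure_subset_quiverClosure {x y : V} (hy : y ∈ quiverClosure E J x) :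
    quiverClosure E J y ⊆ quiverClosure E J x :=
  quiverClosure_subset hy (isClosedUnder_quiverClosure x)

theorem exists_source_reflTransGen [Finite V] (hacyclic : ∀ v : V, ¬ TransGen E v v) (n : V) :
    ∃ y : V, (∀ u : V, ¬ E u y) ∧ ReflTransGen E y n := by
  have : Std.Irrefl (TransGen E) := ⟨hacyclic⟩
  induction n using (Finite.wellFounded_of_trans_of_irrefl (TransGen E)).induction with
  | _ n ih =>
    by_cases hn : ∀ u : V, ¬ E u n
    · exact ⟨n, hn, .refl⟩
    · push Not at hn
      obtain ⟨m, hmn⟩ := hn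
      obtain ⟨y, hy, hym⟩ := ih m (.single hmn)
      exact ⟨y, hy, hym.tail hmn⟩

theorem fromRel_adj_of_asymm (hasymm : ∀ a b : V, E a b → ¬ E b a) {a b : V} (hab : E a b) :
    (fromRel E).Adj a b :=
  (fromRel_adj E a b).2 ⟨fun h ↦ hasymm a b hab (h ▸ hab), Or.inl hab⟩

theorem not_reachable_deleteEdges_of_isAcyclic (hacyc : (fromRel E).IsAcyclic)
    (hasymm : ∀ a b : V, E a b → ¬ E b a) {n v : V} (hnv : E n v) :
    ¬ ((fromRel E).deleteEdges {s(n, v)}).Reachable n v :=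
  isBridge_iff.1 (isAcyclic_iff_forall_adj_isBridge.1 hacyc (fromRel_adj_of_asymm hasymm hnv))

theorem isClosedUnder_reachable_deleteEdges (hacyc : (fromRel E).IsAcyclic)
    (hasymm : ∀ a b : V, E a b → ¬ E b a) {n v : V} (hnv : E n v) (hn : n ∉ J) :
    IsClosedUnder E J {w | ((fromRel E).deleteEdges {s(n, v)}).Reachable n w} := by
  have hv := not_reachable_deleteEdges_of_isAcyclic hacyc hasymm hnv
  constructor
  · intro a b hab hb
    by_contra ha
    rcases Sym2.eq_iff.1 (eq_of_adj_of_reachable_deleteEdges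
      (fromRel_adj_of_asymm hasymm hab).symm hb ha) with ⟨rfl, rfl⟩ | ⟨rfl, rfl⟩
    · exact hasymm _ _ hnv hab
    · exact ha (.refl _)
  · intro w u hw hwJ hwu
    by_contra hu
    rcases Sym2.eq_iff.1 (eq_of_adj_of_reachable_deleteEdges
      (fromRel_adj_of_asymm hasymm hwu) hw hu) with ⟨rfl, rfl⟩ | ⟨rfl, rfl⟩
    · exact hn hwJ
    · exact hv hw

end QuiverClosure

/-- In a finite tree quiver with a distinguished set `J` of vertices containing all
sources, there is a source `x` whose closure `G(x)` satisfies: every immediate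
predecessor of a vertex of `J ∩ G(x)` lies in `J`. -/
theorem exists_source_with_good_closure
    {V : Type*} [Finite V] [Nonempty V]
    (E : V → V → Prop)
    -- the underlying graph of the quiver is a tree
    (htree : (SimpleGraph.fromRel E).IsTree)
    -- no oriented cycles
    (hacyclic : ∀ v : V, ¬ Relation.TransGen E v v)
    (J : Set V)
    -- `J` contains all sources
    (hsources : ∀ v : V, (∀ u : V, ¬ E u v) → v ∈ J) :
    ∃ x : V, (∀ u : V, ¬ E u x) ∧ x ∈ J ∧
      ∀ n v : V, E n v → v ∈ quiverClosure E J x → v ∈ J → n ∈ J := by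
  have hasymm (a b : V) (hab : E a b) (hba : E b a) : False :=
    hacyclic a (.tail (.single hab) hba)
  obtain ⟨x₀, hx₀, -⟩ := exists_source_reflTransGen hacyclic (Classical.arbitrary V)
  obtain ⟨x, hx, hxmin⟩ := Set.exists_min_image {x : V | ∀ u, ¬ E u x}
    (fun x ↦ (quiverClosure E J x).ncard) (Set.toFinite _) ⟨x₀, hx₀⟩
  refine ⟨x, hx, hsources x hx, fun n v hnv hvG _ ↦ ?_⟩
  by_contra hn
  have hnG : n ∈ quiverClosure E J x := (isClosedUnder_quiverClosure x).1 n v hnv hvG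
  obtain ⟨y, hy, hyn⟩ := exists_source_reflTransGen hacyclic n
  have hS := isClosedUnder_reachable_deleteEdges htree.isAcyclic hasymm hnv hn
  have hGyS := quiverClosure_subset (hS.mem_of_reflTransGen hyn (.refl n)) hS
  have hGyx := quiverClosure_subset_quiverClosure
    ((isClosedUnder_quiverClosure x).mem_of_reflTransGen hyn hnG)
  have hvGy : v ∉ quiverClosure E J y :=
    fun h ↦ not_reachable_deleteEdges_of_isAcyclic htree.isAcyclic hasymm hnv (hGyS h)
  have hlt : (quiverClosure E J y).ncard < (quiverClosure E J x).ncard :=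
    Set.ncard_lt_ncard ((Set.ssubset_iff_of_subset hGyx).2 ⟨v, hvG, hvGy⟩) (Set.toFinite _)
  exact (hxmin y hy).not_gt hlt
end
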